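/- Let α ∈ ℝ, set λ := √(1 + α²), and let η : I → ℝ be a maximal C² solution of the ODE (1 + α²)·η'' = 1 + α² + (η')² on an open interval I. Then there exist x₀ ∈ ℝ and c ∈ ℝ such that I = (x₀ − λπ/2, x₀ + λπ/2) and η(x) = λ²·log(sec((x − x₀)/λ)) + c for all x ∈ I. -/

import Mathlib

/-!
Writing `κ = 1 + α²` and `v = η'`, the equation reads `v' = 1 + v² / κ`, so
`arctan (v / √κ)` has constant derivative `1 / √κ`. Hence `v = √κ tan ((x - x₀) / √κ)`
for some `x₀`, which forces `I` to lie in the interval of length `√κ π` centred at `x₀`, and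
integrating once more identifies `η` with the grim reaper `κ log sec ((x - x₀) / √κ) + c`.
That function solves the equation on the whole interval, so maximality gives equality.
-/

open Real Set Topology

def SolvesGrimODE (κ : ℝ) (f : ℝ → ℝ) (s : Set ℝ) : Prop :=
  ∀ x ∈ s, κ * deriv (deriv f) x = κ + deriv f x ^ 2

noncomputable def grimReaper (κ x₀ x : ℝ) : ℝ :=
  κ * log (1 / cos ((x - x₀) / √κ))

def grimDomain (κ x₀ : ℝ) : Set ℝ :=
  Ioo (x₀ - √κ * π / 2) (x₀ + √κ * π / 2)

lemma sub_div_mem_Ioo_iff {l x₀ x : ℝ} (hl : 0 < l) :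
    (x - x₀) / l ∈ Ioo (-(π / 2)) (π / 2) ↔ x ∈ Ioo (x₀ - l * π / 2) (x₀ + l * π / 2) := by
  simp only [mem_Ioo, lt_div_iff₀ hl, div_lt_iff₀ hl]
  constructor <;> rintro ⟨h₁, h₂⟩ <;> constructor <;> linarith

lemma SolvesGrimODE.add_const {κ : ℝ} {f : ℝ → ℝ} {s : Set ℝ} (h : SolvesGrimODE κ f s)
    (c : ℝ) : SolvesGrimODE κ (fun x => f x + c) s := by
  simpa only [SolvesGrimODE, deriv_add_const'] using h

section grimReaper

variable {κ x₀ x : ℝ}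

lemma cos_grimReaper_pos (hκ : 0 < κ) (hx : x ∈ grimDomain κ x₀) :
    0 < cos ((x - x₀) / √κ) :=
  cos_pos_of_mem_Ioo ((sub_div_mem_Ioo_iff (sqrt_pos.2 hκ)).2 hx)

lemma hasDerivAt_grimReaper (hκ : 0 < κ) (hx : cos ((x - x₀) / √κ) ≠ 0) :
    HasDerivAt (grimReaper κ x₀) (√κ * tan ((x - x₀) / √κ)) x := by
  have hu : HasDerivAt (fun y => (y - x₀) / √κ) (1 / √κ) x := by
    simpa using ((hasDerivAt_id x).sub_const x₀).div_const √κ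
  have hcos : HasDerivAt (fun y => cos ((y - x₀) / √κ)) (-sin ((x - x₀) / √κ) * (1 / √κ)) x :=
    (hasDerivAt_cos _).comp x hu
  have hsec : HasDerivAt (fun y => 1 / cos ((y - x₀) / √κ)) _ x :=
    (hasDerivAt_const x (1 : ℝ)).div hcos hx
  refine ((hsec.log (one_div_ne_zero hx)).const_mul κ).congr_deriv ?_
  rw [tan_eq_sin_div_cos]
  field_simp
  linear_combination -sin ((x - x₀) / √κ) * sq_sqrt hκ.le

lemma hasDerivAt_mul_tan_sub_div {l : ℝ} (hl : l ≠ 0) (hx : cos ((x - x₀) / l) ≠ 0) :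
    HasDerivAt (fun y => l * tan ((y - x₀) / l)) (1 / cos ((x - x₀) / l) ^ 2) x := by
  have hu : HasDerivAt (fun y => (y - x₀) / l) (1 / l) x := by
    simpa using ((hasDerivAt_id x).sub_const x₀).div_const l
  refine (((hasDerivAt_tan hx).comp x hu).const_mul l).congr_deriv ?_
  field_simp

lemma contDiffOn_grimReaper (hκ : 0 < κ) :
    ContDiffOn ℝ 2 (grimReaper κ x₀) (grimDomain κ x₀) := by
  have hcos : ContDiffOn ℝ 2 (fun x => cos ((x - x₀) / √κ)) (grimDomain κ x₀) :=
    (contDiff_cos.comp ((contDiff_id.sub contDiff_const).div_const _)).contDiffOn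
  have hsec := (contDiffOn_const (c := (1 : ℝ))).div hcos
    fun x hx => (cos_grimReaper_pos hκ hx).ne'
  exact contDiffOn_const.mul (hsec.log fun x hx => one_div_ne_zero (cos_grimReaper_pos hκ hx).ne')

lemma solvesGrimODE_grimReaper (hκ : 0 < κ) :
    SolvesGrimODE κ (grimReaper κ x₀) (grimDomain κ x₀) := by
  intro x hx
  have hcos := (cos_grimReaper_pos hκ hx).ne'
  have hderiv : deriv (grimReaper κ x₀) =ᶠ[𝓝 x] fun y => √κ * tan ((y - x₀) / √κ) := by
    filter_upwards [isOpen_Ioo.mem_nhds hx] with y hy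
    exact (hasDerivAt_grimReaper hκ (cos_grimReaper_pos hκ hy).ne').deriv
  rw [hderiv.deriv_eq, (hasDerivAt_mul_tan_sub_div (sqrt_ne_zero'.2 hκ) hcos).deriv,
    hderiv.eq_of_nhds, tan_eq_sin_div_cos]
  field_simp
  linear_combination -κ * sin_sq_add_cos_sq ((x - x₀) / √κ)
    - sin ((x - x₀) / √κ) ^ 2 * sq_sqrt hκ.le

end grimReaper

section classification

variable {κ : ℝ} {f : ℝ → ℝ} {s : Set ℝ}

lemma SolvesGrimODE.exists_arctan_eq (hode : SolvesGrimODE κ f s) (hκ : 0 < κ)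
    (hs : IsOpen s) (hs' : IsPreconnected s) (hf : ContDiffOn ℝ 2 f s) :
    ∃ x₀, ∀ x ∈ s, arctan (deriv f x / √κ) = (x - x₀) / √κ := by
  have hv : DifferentiableOn ℝ (deriv f) s :=
    (hf.deriv_of_isOpen hs (by norm_num)).differentiableOn one_ne_zero
  have harctan : ∀ x ∈ s, HasDerivAt (fun y => arctan (deriv f y / √κ)) (1 / √κ) x := by
    intro x hx
    have h := (((hv x hx).differentiableAt (hs.mem_nhds hx)).hasDerivAt.div_const √κ).arctan
    refine h.congr_deriv ?_
    have hpos : 0 < κ + deriv f x ^ 2 := by positivity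
    have hv' : deriv (deriv f) x = (κ + deriv f x ^ 2) / κ := by
      rw [eq_div_iff hκ.ne', mul_comm, hode x hx]
    rw [hv', div_pow, sq_sqrt hκ.le]
    field_simp
  have hlin : ∀ x, HasDerivAt (fun y => y / √κ) (1 / √κ) x := fun x =>
    (hasDerivAt_id x).div_const √κ
  obtain ⟨a, ha⟩ := hs.exists_eq_add_of_deriv_eq hs'
    (fun x hx => (harctan x hx).differentiableAt.differentiableWithinAt)
    (fun x _ => (hlin x).differentiableAt.differentiableWithinAt)
    (fun x hx => by rw [(harctan x hx).deriv, (hlin x).deriv])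
  refine ⟨-(a * √κ), fun x hx => (ha hx).trans ?_⟩
  field_simp [sqrt_ne_zero'.2 hκ]
  ring

theorem SolvesGrimODE.exists_eqOn_grimReaper_add_const (hode : SolvesGrimODE κ f s)
    (hκ : 0 < κ) (hs : IsOpen s) (hs' : IsPreconnected s) (hf : ContDiffOn ℝ 2 f s) :
    ∃ x₀ c, s ⊆ grimDomain κ x₀ ∧ EqOn f (fun x => grimReaper κ x₀ x + c) s := by
  obtain ⟨x₀, hx₀⟩ := hode.exists_arctan_eq hκ hs hs' hf
  have hsub : s ⊆ grimDomain κ x₀ := fun x hx =>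
    (sub_div_mem_Ioo_iff (sqrt_pos.2 hκ)).1 (hx₀ x hx ▸ arctan_mem_Ioo _)
  have hreaper : ∀ x ∈ s, HasDerivAt (grimReaper κ x₀) (√κ * tan ((x - x₀) / √κ)) x :=
    fun x hx => hasDerivAt_grimReaper hκ (cos_grimReaper_pos hκ (hsub hx)).ne'
  obtain ⟨c, hc⟩ := hs.exists_eq_add_of_deriv_eq hs' (hf.differentiableOn two_ne_zero)
    (fun x hx => (hreaper x hx).differentiableAt.differentiableWithinAt)
    (fun x hx => by
      rw [(hreaper x hx).deriv, ← hx₀ x hx, tan_arctan, mul_div_cancel₀ _ (sqrt_ne_zero'.2 hκ)])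
  exact ⟨x₀, c, hsub, hc⟩

end classification

theorem grim_ode_classification (α : ℝ) (I : Set ℝ)
    (hI : IsOpen I) (hord : I.OrdConnected)
    (η : ℝ → ℝ) (hη : ContDiffOn ℝ 2 η I)
    (hode : ∀ x ∈ I, (1 + α ^ 2) * deriv (deriv η) x = 1 + α ^ 2 + (deriv η x) ^ 2)
    (hmax : ∀ (J : Set ℝ) (ζ : ℝ → ℝ), IsOpen J → J.OrdConnected → I ⊆ J →
      ContDiffOn ℝ 2 ζ J → (∀ x ∈ I, ζ x = η x) →
      (∀ x ∈ J, (1 + α ^ 2) * deriv (deriv ζ) x = 1 + α ^ 2 + (deriv ζ x) ^ 2) → J = I) :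
    ∃ x₀ c : ℝ,
      I = Set.Ioo (x₀ - Real.sqrt (1 + α ^ 2) * π / 2) (x₀ + Real.sqrt (1 + α ^ 2) * π / 2) ∧
      ∀ x ∈ I, η x =
        (1 + α ^ 2) * Real.log (1 / Real.cos ((x - x₀) / Real.sqrt (1 + α ^ 2))) + c := by
  have hκ : 0 < 1 + α ^ 2 := by positivity
  obtain ⟨x₀, c, hsub, heq⟩ :=
    SolvesGrimODE.exists_eqOn_grimReaper_add_const hode hκ hI hord.isPreconnected hη
  have hJI := hmax _ _ isOpen_Ioo ordConnected_Ioo hsub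
    ((contDiffOn_grimReaper hκ).add contDiffOn_const) (fun x hx => (heq hx).symm)
    ((solvesGrimODE_grimReaper hκ).add_const c)
  exact ⟨x₀, c, hJI.symm, heq⟩
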